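/- arXiv:2211.09819 — 4 statements merged into one kernel-verified Lean document; each statement's English description precedes it below -/
import Mathlib

section
/- For the hat game with N players and 2 colors where each hat independently has color 0 with probability p ∈ [0,1], the maximum over all strategies of the winning probability equals 1 minus the minimum of μ_p(A) over all adequate sets A ⊆ (Fin N → Fin 2). -/
open scoped Classical

/-- A strategy for the hat game with `N` players and two colors: each player's guess
depends only on the hats of the other players. -/
def IsStrategy {N : ℕ} (s : Fin N → (Fin N → Fin 2) → Option (Fin 2)) : Prop :=
  ∀ i : Fin N, ∀ b b' : Fin N → Fin 2, (∀ j, j ≠ i → b j = b' j) → s i b = s i b'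

/-- A configuration `b` is winning for `s`: no player guesses incorrectly and at
least one player guesses correctly. -/
def Wins {N : ℕ} (s : Fin N → (Fin N → Fin 2) → Option (Fin 2))
    (b : Fin N → Fin 2) : Prop :=
  (∀ i c, s i b = some c → c = b i) ∧ ∃ i, s i b = some (b i)

/-- Probability of a configuration: each hat independently has color 0 with
probability `p`. -/
noncomputable def mu {N : ℕ} (p : ℝ) (b : Fin N → Fin 2) : ℝ :=
  ∏ i, if b i = 0 then p else 1 - p

/-- The winning probability of strategy `s`. -/
noncomputable def winProb {N : ℕ} (p : ℝ)
    (s : Fin N → (Fin N → Fin 2) → Option (Fin 2)) : ℝ :=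
  ∑ b : Fin N → Fin 2, if Wins s b then mu p b else 0

/-- A set of configurations is adequate if every configuration outside it can be
moved into it by flipping one coordinate. -/
def AdequateSet {N : ℕ} (A : Finset (Fin N → Fin 2)) : Prop :=
  ∀ x ∉ A, ∃ i : Fin N, Function.update x i (x i + 1) ∈ A

section Aux
variable {N : ℕ}

lemma fin2_ne_add_one (c : Fin 2) : c + 1 ≠ c := by revert c; decide

lemma fin2_ne_imp (c d : Fin 2) (h : c ≠ d) : d = c + 1 := by revert c d; decide

lemma mu_nonneg {p : ℝ} (hp : p ∈ Set.Icc (0:ℝ) 1) (b : Fin N → Fin 2) : 0 ≤ mu p b := by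
  unfold mu
  apply Finset.prod_nonneg
  intro i _
  split
  · exact hp.1
  · linarith [hp.2]

lemma sum_mu_eq_one {p : ℝ} : ∑ b : Fin N → Fin 2, mu p b = 1 := by
  unfold mu
  rw [← Fintype.prod_sum (fun (i : Fin N) (c : Fin 2) => if c = 0 then p else 1 - p)]
  have h : ∀ i : Fin N, (∑ c : Fin 2, if c = 0 then p else 1 - p) = 1 := by
    intro i; simp [Fin.sum_univ_two]
  simp [h]

/-- The losing set of a strategy is adequate. -/
lemma losing_adequate {s : Fin N → (Fin N → Fin 2) → Option (Fin 2)} (hs : IsStrategy s) :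
    AdequateSet (Finset.univ.filter (fun b => ¬ Wins s b)) := by
  intro x hx
  simp only [Finset.mem_filter, Finset.mem_univ, true_and, not_not] at hx
  obtain ⟨-, i, hi⟩ := hx
  refine ⟨i, ?_⟩
  simp only [Finset.mem_filter, Finset.mem_univ, true_and]
  intro hw
  have heq : s i (Function.update x i (x i + 1)) = s i x := by
    apply hs
    intro j hj
    simp [Function.update_of_ne hj]
  have h2 := hw.1 i (x i) (heq.trans hi)
  rw [Function.update_self] at h2
  exact fin2_ne_add_one (x i) h2.symm

/-- winProb is 1 minus the measure of the losing set. -/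
lemma winProb_eq {p : ℝ} (s : Fin N → (Fin N → Fin 2) → Option (Fin 2)) :
    winProb p s = 1 - ∑ b ∈ Finset.univ.filter (fun b => ¬ Wins s b), mu p b := by
  have h := Finset.sum_filter_add_sum_filter_not Finset.univ (fun b => Wins s b)
    (mu p (N := N))
  rw [sum_mu_eq_one] at h
  unfold winProb
  rw [Finset.sum_ite, Finset.sum_const_zero, add_zero]
  linarith

noncomputable def strat (A : Finset (Fin N → Fin 2)) (i : Fin N) (b : Fin N → Fin 2) :
    Option (Fin 2) :=
  if Function.update b i 0 ∉ A ∧ Function.update b i 1 ∈ A then some 0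
  else if Function.update b i 1 ∉ A ∧ Function.update b i 0 ∈ A then some 1
  else none

lemma strat_isStrategy (A : Finset (Fin N → Fin 2)) : IsStrategy (strat A) := by
  intro i b b' h
  have hupd : ∀ c : Fin 2, Function.update b i c = Function.update b' i c := by
    intro c; funext j
    by_cases hj : j = i
    · subst hj; simp
    · simp [Function.update_of_ne hj, h j hj]
  simp only [strat, hupd]

lemma strat_wins {A : Finset (Fin N → Fin 2)} (hA : AdequateSet A)
    {b : Fin N → Fin 2} (hb : b ∉ A) : Wins (strat A) b := by
  have h01 : ∀ c : Fin 2, c = 0 ∨ c = 1 := by decide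
  constructor
  · intro i c hc
    by_contra hne
    have hbc : b i = c + 1 := fin2_ne_imp c (b i) hne
    unfold strat at hc
    split_ifs at hc with h1 h2
    · -- guessed 0, so b i = 1
      cases hc
      have hb1 : Function.update b i 1 = b := by
        have h1' : b i = 1 := by rw [hbc]; decide
        rw [← h1']; exact Function.update_eq_self i b
      rw [hb1] at h1
      exact hb h1.2
    · cases hc
      have hb0 : Function.update b i 0 = b := by
        have h0' : b i = 0 := by rw [hbc]; decide
        rw [← h0']; exact Function.update_eq_self i b
      rw [hb0] at h2
      exact hb h2.2
  · obtain ⟨i, hi⟩ := hA b hb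
    refine ⟨i, ?_⟩
    rcases h01 (b i) with h0 | h1
    · have hb0 : Function.update b i 0 = b := by rw [← h0]; exact Function.update_eq_self i b
      have hb1 : Function.update b i 1 ∈ A := by
        have : b i + 1 = 1 := by rw [h0]; decide
        rwa [this] at hi
      unfold strat
      rw [if_pos ⟨by rw [hb0]; exact hb, hb1⟩, h0]
    · have hb1 : Function.update b i 1 = b := by rw [← h1]; exact Function.update_eq_self i b
      have hb0 : Function.update b i 0 ∈ A := by
        have : b i + 1 = 0 := by rw [h1]; decide
        rwa [this] at hi
      unfold strat
      rw [if_neg (fun h => h.1 hb0), if_pos ⟨by rw [hb1]; exact hb, hb0⟩, h1]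

end Aux

/-- The maximum winning probability over all strategies equals `1` minus the minimum
of `μ_p` over all adequate sets. -/
theorem maxWinProb_eq_one_sub_min_adequate {N : ℕ} (p : ℝ) (hp : p ∈ Set.Icc (0:ℝ) 1) :
    ∃ m : ℝ,
      IsLeast {y : ℝ | ∃ A : Finset (Fin N → Fin 2),
        AdequateSet A ∧ y = ∑ b ∈ A, mu p b} m ∧
      IsGreatest {x : ℝ | ∃ s : Fin N → (Fin N → Fin 2) → Option (Fin 2),
        IsStrategy s ∧ x = winProb p s} (1 - m) := by
  set S : Finset ℝ := ((Finset.univ : Finset (Finset (Fin N → Fin 2))).filter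
    AdequateSet).image (fun A => ∑ b ∈ A, mu p b) with hS
  have hSne : S.Nonempty := by
    refine ⟨∑ b ∈ (Finset.univ : Finset (Fin N → Fin 2)), mu p b, ?_⟩
    simp only [hS, Finset.mem_image, Finset.mem_filter, Finset.mem_univ, true_and]
    exact ⟨Finset.univ, fun x hx => absurd (Finset.mem_univ x) hx, rfl⟩
  set m := S.min' hSne with hm
  have hsetS : {y : ℝ | ∃ A : Finset (Fin N → Fin 2),
      AdequateSet A ∧ y = ∑ b ∈ A, mu p b} = ↑S := by
    ext y
    simp only [hS, Set.mem_setOf_eq, Finset.coe_image, Set.mem_image, Finset.mem_coe,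
      Finset.mem_filter, Finset.mem_univ, true_and]
    constructor
    · rintro ⟨A, hA, rfl⟩; exact ⟨A, hA, rfl⟩
    · rintro ⟨A, hA, rfl⟩; exact ⟨A, hA, rfl⟩
  refine ⟨m, ⟨?_, ?_⟩, ?_, ?_⟩
  · rw [hsetS]; exact S.min'_mem hSne
  · intro y hy
    rw [hsetS] at hy
    exact S.min'_le y hy
  · -- membership: there's a strategy achieving 1 - m
    have hmS := S.min'_mem hSne
    simp only [hS, Finset.mem_image, Finset.mem_filter, Finset.mem_univ, true_and] at hmS
    obtain ⟨A, hA, hAm⟩ := hmS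
    refine ⟨strat A, strat_isStrategy A, ?_⟩
    -- winProb (strat A) = 1 - m : ≤ and ≥
    have hle : winProb p (strat A) ≤ 1 - m := by
      rw [winProb_eq]
      have : m ≤ ∑ b ∈ Finset.univ.filter (fun b => ¬ Wins (strat A) b), mu p b := by
        apply S.min'_le
        simp only [hS, Finset.mem_image, Finset.mem_filter, Finset.mem_univ, true_and]
        exact ⟨_, losing_adequate (strat_isStrategy A), rfl⟩
      linarith
    have hge : 1 - m ≤ winProb p (strat A) := by
      rw [winProb_eq]
      have hsub : Finset.univ.filter (fun b => ¬ Wins (strat A) b) ⊆ A := by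
        intro b hbmem
        simp only [Finset.mem_filter, Finset.mem_univ, true_and] at hbmem
        by_contra hbA
        exact hbmem (strat_wins hA hbA)
      have := Finset.sum_le_sum_of_subset_of_nonneg hsub
        (fun b _ _ => mu_nonneg hp b)
      have hAm' : (∑ b ∈ A, mu p b) = m := hAm
      linarith
    linarith
  · -- upper bound
    rintro x ⟨s, hs, rfl⟩
    rw [winProb_eq]
    have : m ≤ ∑ b ∈ Finset.univ.filter (fun b => ¬ Wins s b), mu p b := by
      apply S.min'_le
      simp only [hS, Finset.mem_image, Finset.mem_filter, Finset.mem_univ, true_and]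
      exact ⟨_, losing_adequate hs, rfl⟩
    linarith
end

section
/- For every p ∈ [0,1], the set A₁ ⊆ (Fin 5 → Fin 2) consisting of the configurations 00000, 00111, 01011, 10011, 11100, 11101, 11110 satisfies μ_p(A₁) = p⁵ + 4p²(1−p)³ + 2p(1−p)⁴ = 2p − 4p² + 4p⁴ − p⁵; consequently, there exists a strategy for the 5-player 2-color hat game whose winning probability is 1 − 2p + 4p² − 4p⁴ + p⁵. -/
open scoped Classical

/-- The set A₁ = {00000, 00111, 01011, 10011, 11100, 11101, 11110}. -/
def A1 : Finset (Fin 5 → Fin 2) :=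
  {![0,0,0,0,0], ![0,0,1,1,1], ![0,1,0,1,1], ![1,0,0,1,1],
   ![1,1,1,0,0], ![1,1,1,0,1], ![1,1,1,1,0]}

lemma fin2cases (x : Fin 2) : x = 0 ∨ x = 1 := by omega

/-- `μ_p(A₁) = p⁵ + 4p²(1−p)³ + 2p(1−p)⁴ = 2p − 4p² + 4p⁴ − p⁵`, and consequently
there is a strategy with winning probability `1 − 2p + 4p² − 4p⁴ + p⁵`. -/
theorem muA1_and_strategy (p : ℝ) (hp : p ∈ Set.Icc (0:ℝ) 1) :
    (∑ b ∈ A1, mu p b) = p^5 + 4*p^2*(1-p)^3 + 2*p*(1-p)^4 ∧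
    (∑ b ∈ A1, mu p b) = 2*p - 4*p^2 + 4*p^4 - p^5 ∧
    ∃ s : Fin 5 → (Fin 5 → Fin 2) → Option (Fin 2),
      IsStrategy s ∧ winProb p s = 1 - 2*p + 4*p^2 - 4*p^4 + p^5 := by
  have hA1 : (∑ b ∈ A1, mu p b) = p^5 + 4*p^2*(1-p)^3 + 2*p*(1-p)^4 := by
    rw [A1]
    rw [Finset.sum_insert (by decide), Finset.sum_insert (by decide),
        Finset.sum_insert (by decide), Finset.sum_insert (by decide),
        Finset.sum_insert (by decide), Finset.sum_insert (by decide),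
        Finset.sum_singleton]
    simp [mu, Fin.prod_univ_five]
    ring
  have hA1' : (∑ b ∈ A1, mu p b) = 2*p - 4*p^2 + 4*p^4 - p^5 := by rw [hA1]; ring
  refine ⟨hA1, hA1', ?_⟩
  have hadq : AdequateSet A1 := by unfold AdequateSet; decide
  set s : Fin 5 → (Fin 5 → Fin 2) → Option (Fin 2) := fun i b =>
    if Function.update b i 0 ∈ A1 ∧ Function.update b i 1 ∉ A1 then some 1
    else if Function.update b i 1 ∈ A1 ∧ Function.update b i 0 ∉ A1 then some 0
    else none with hs
  have hstrat : IsStrategy s := by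
    intro i b b' hbb'
    have h0 : Function.update b i 0 = Function.update b' i 0 := by
      funext j
      rcases eq_or_ne j i with rfl | hj
      · simp
      · simp [Function.update_of_ne hj, hbb' j hj]
    have h1 : Function.update b i 1 = Function.update b' i 1 := by
      funext j
      rcases eq_or_ne j i with rfl | hj
      · simp
      · simp [Function.update_of_ne hj, hbb' j hj]
    simp [hs, h0, h1]
  have hself : ∀ (b : Fin 5 → Fin 2) (i : Fin 5), Function.update b i (b i) = b := by
    intro b i; funext j; rcases eq_or_ne j i with rfl | hj <;> simp [Function.update_of_ne]
  have hwin : ∀ b : Fin 5 → Fin 2, Wins s b ↔ b ∉ A1 := by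
    intro b
    constructor
    · rintro ⟨_, i, hi⟩ hbA
      simp only [hs] at hi
      split_ifs at hi with h1 h2
      · have : b i = 1 := by simpa using (Option.some_inj.mp hi).symm
        exact h1.2 (by rw [← this, hself] at *; exact hbA)
      · have : b i = 0 := by simpa using (Option.some_inj.mp hi).symm
        exact h2.2 (by rw [← this, hself] at *; exact hbA)
    · intro hbA
      constructor
      · intro i c hc
        simp only [hs] at hc
        split_ifs at hc with h1 h2
        · rcases fin2cases (b i) with hb | hb
          · exact absurd (by rw [← hb, hself] at h1; exact h1.1) hbA
          · rw [hb]; exact (Option.some_inj.mp hc).symm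
        · rcases fin2cases (b i) with hb | hb
          · rw [hb]; exact (Option.some_inj.mp hc).symm
          · exact absurd (by rw [← hb, hself] at h2; exact h2.1) hbA
      · obtain ⟨i, hi⟩ := hadq b hbA
        refine ⟨i, ?_⟩
        rcases fin2cases (b i) with hb | hb
        · have hflip : Function.update b i 1 ∈ A1 := by
            have : b i + 1 = 1 := by rw [hb]; rfl
            rwa [this] at hi
          have hb0 : Function.update b i 0 ∉ A1 := by rw [← hb, hself]; exact hbA
          simp [hs, hb, hflip, hb0]
        · have hflip : Function.update b i 0 ∈ A1 := by
            have : b i + 1 = 0 := by rw [hb]; rfl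
            rwa [this] at hi
          have hb1 : Function.update b i 1 ∉ A1 := by rw [← hb, hself]; exact hbA
          simp [hs, hb, hflip, hb1]
  refine ⟨s, hstrat, ?_⟩
  have htot : ∑ b : Fin 5 → Fin 2, mu p b = 1 := by
    have := Finset.prod_univ_sum (fun _ : Fin 5 => (Finset.univ : Finset (Fin 2)))
      (fun _ j => if j = 0 then p else 1 - p)
    simp [Fin.sum_univ_two] at this
    simpa [mu] using this.symm
  have hw : winProb p s = ∑ b ∈ A1ᶜ, mu p b := by
    rw [winProb, ← Finset.sum_filter]
    congr 1
    ext b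
    simp [hwin b]
  have hsplit := Finset.sum_compl_add_sum A1 (mu p)
  rw [htot] at hsplit
  rw [hw]; linarith [hA1']
end

section
/- The 7-element set A₂ ⊆ (Fin 5 → Fin 2) consisting of the configurations 00001, 00110, 01110, 10110, 11000, 11011, 11101 is adequate, and for every p ∈ [0,1] it satisfies μ_p(A₂) = 2p(1−p)⁴ + 2p²(1−p)³ + 2p³(1−p)² + p⁴(1−p) = 2p − 6p² + 8p³ − 5p⁴ + p⁵; consequently, there exists a strategy for the 5-player 2-color hat game whose winning probability is 1 − 2p + 6p² − 8p³ + 5p⁴ − p⁵. -/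
open scoped Classical

/-- The set A₂ = {00001, 00110, 01110, 10110, 11000, 11011, 11101}. -/
def A2 : Finset (Fin 5 → Fin 2) :=
  {![0,0,0,0,1], ![0,0,1,1,0], ![0,1,1,1,0], ![1,0,1,1,0],
   ![1,1,0,0,0], ![1,1,0,1,1], ![1,1,1,0,1]}


def myS : Fin 5 → (Fin 5 → Fin 2) → Option (Fin 2) := fun i b =>
  if Function.update b i 0 ∈ A2 ∧ Function.update b i 1 ∉ A2 then some 1
  else if Function.update b i 1 ∈ A2 ∧ Function.update b i 0 ∉ A2 then some 0 else none

lemma A2_adeq : ∀ x ∉ A2, ∃ i : Fin 5, Function.update x i (x i + 1) ∈ A2 := by decide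

lemma winsIff : ∀ b, Wins myS b ↔ b ∉ A2 := by
  intro b
  constructor
  · rintro ⟨-, i, hi⟩ hb
    simp only [myS] at hi
    split_ifs at hi with h1 h2'
    · have hbi : b i = 1 := by
        have : b i = 0 ∨ b i = 1 := by omega
        rcases this with h | h
        · exact absurd (Option.some.inj hi).symm (by simp [h])
        · exact h
      apply h1.2
      rwa [← hbi, Function.update_eq_self]
    · have hbi : b i = 0 := by
        have : b i = 0 ∨ b i = 1 := by omega
        rcases this with h | h
        · exact h
        · exact absurd (Option.some.inj hi).symm (by simp [h])
      apply h2'.2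
      rwa [← hbi, Function.update_eq_self]
  · intro hb
    constructor
    · intro i c hc
      simp only [myS] at hc
      split_ifs at hc with h1 h2
      · have hc1 : c = 1 := (Option.some.inj hc).symm
        have hbi : b i = 0 ∨ b i = 1 := by omega
        rcases hbi with h | h
        · exfalso; apply hb
          have := h1.1
          rwa [← h, Function.update_eq_self] at this
        · rw [hc1, h]
      · have hc0 : c = 0 := (Option.some.inj hc).symm
        have hbi : b i = 0 ∨ b i = 1 := by omega
        rcases hbi with h | h
        · rw [hc0, h]
        · exfalso; apply hb
          have := h2.1
          rwa [← h, Function.update_eq_self] at this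
    · obtain ⟨i, hi⟩ := A2_adeq b hb
      refine ⟨i, ?_⟩
      have hbi : b i = 0 ∨ b i = 1 := by omega
      have hself : Function.update b i (b i) = b := Function.update_eq_self i b
      simp only [myS]
      rcases hbi with h | h
      · have h1 : Function.update b i 1 ∈ A2 := by rwa [h, show (0:Fin 2)+1 = 1 by decide] at hi
        have h0 : Function.update b i 0 ∉ A2 := by rwa [← h, hself]
        rw [if_neg (by tauto), if_pos ⟨h1, h0⟩, h]
      · have h0 : Function.update b i 0 ∈ A2 := by rwa [h, show (1:Fin 2)+1 = 0 by decide] at hi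
        have h1 : Function.update b i 1 ∉ A2 := by rwa [← h, hself]
        rw [if_pos ⟨h0, h1⟩, h]

lemma myS_strategy : IsStrategy myS := by
  intro i b b' h
  have h0 : ∀ c : Fin 2, Function.update b i c = Function.update b' i c := by
    intro c; funext j
    by_cases hj : j = i <;> simp [Function.update, hj, h j]
  simp only [myS, h0]

lemma mu_total (p : ℝ) : (∑ b : Fin 5 → Fin 2, mu p b) = 1 := by
  have h := Finset.prod_univ_sum (fun _ : Fin 5 => (Finset.univ : Finset (Fin 2)))
    (fun _ c => if c = 0 then p else 1 - p)
  simp only [Fintype.piFinset_univ] at h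
  simp only [mu]
  rw [← h]
  simp [Fin.sum_univ_two]

lemma sumA2 (p : ℝ) :
    (∑ b ∈ A2, mu p b) = 2*p*(1-p)^4 + 2*p^2*(1-p)^3 + 2*p^3*(1-p)^2 + p^4*(1-p) := by
  rw [A2]
  rw [Finset.sum_insert (by decide), Finset.sum_insert (by decide),
    Finset.sum_insert (by decide), Finset.sum_insert (by decide),
    Finset.sum_insert (by decide), Finset.sum_insert (by decide),
    Finset.sum_singleton]
  simp [mu, Fin.prod_univ_five]
  ring

/-- A₂ is adequate, `μ_p(A₂) = 2p(1−p)⁴ + 2p²(1−p)³ + 2p³(1−p)² + p⁴(1−p)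
= 2p − 6p² + 8p³ − 5p⁴ + p⁵`, and consequently there is a strategy with winning
probability `1 − 2p + 6p² − 8p³ + 5p⁴ − p⁵`. -/
theorem A2_adequate_mu_and_strategy :
    (∀ x ∉ A2, ∃ i : Fin 5, Function.update x i (x i + 1) ∈ A2) ∧
    ∀ p : ℝ, p ∈ Set.Icc (0:ℝ) 1 →
      (∑ b ∈ A2, mu p b) = 2*p*(1-p)^4 + 2*p^2*(1-p)^3 + 2*p^3*(1-p)^2 + p^4*(1-p) ∧
      (∑ b ∈ A2, mu p b) = 2*p - 6*p^2 + 8*p^3 - 5*p^4 + p^5 ∧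
      ∃ s : Fin 5 → (Fin 5 → Fin 2) → Option (Fin 2),
        IsStrategy s ∧ winProb p s = 1 - 2*p + 6*p^2 - 8*p^3 + 5*p^4 - p^5 := by
  refine ⟨A2_adeq, fun p _ => ⟨sumA2 p, ?_, myS, myS_strategy, ?_⟩⟩
  · rw [sumA2 p]; ring
  · have key : winProb p myS = (∑ b : Fin 5 → Fin 2, mu p b) - ∑ b ∈ A2, mu p b := by
      rw [winProb,
        show (∑ b ∈ A2, mu p b) = ∑ b : Fin 5 → Fin 2, if b ∈ A2 then mu p b else 0 by
          rw [Finset.sum_ite_mem, Finset.univ_inter],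
        ← Finset.sum_sub_distrib]
      refine Finset.sum_congr rfl fun b _ => ?_
      by_cases hb : b ∈ A2 <;> simp [winsIff, hb]
    rw [key, mu_total, sumA2]
    ring
end

section
/- Every adequate subset of (Fin 5 → Fin 2) has at least 7 elements, and there exists an adequate subset with exactly 7 elements; i.e., the minimum cardinality of an adequate subset of the 5-dimensional binary cube is 7. -/
open scoped Classical

/-! ### Auxiliary machinery for the lower bound -/

/-- Encode a configuration as a number in `[0, 32)`. -/
def q5enc (x : Fin 5 → Fin 2) : ℕ :=
  (x 0).val + 2*(x 1).val + 4*(x 2).val + 8*(x 3).val + 16*(x 4).val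

/-- Bitmask of the closed Hamming ball of radius 1 around vertex `n` of `Q5`. -/
def q5ball (n : ℕ) : ℕ :=
  1 <<< n ||| 1 <<< (n ^^^ 1) ||| 1 <<< (n ^^^ 2) ||| 1 <<< (n ^^^ 4) |||
    1 <<< (n ^^^ 8) ||| 1 <<< (n ^^^ 16)

/-- Position of the lowest clear bit (with fuel). -/
def q5lcb : ℕ → ℕ → ℕ
  | 0, _ => 0
  | f+1, cov => if cov % 2 = 0 then 0 else q5lcb f (cov / 2) + 1

/-- Popcount (with fuel). -/
def q5pc : ℕ → ℕ → ℕ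
  | 0, _ => 0
  | f+1, c => c % 2 + q5pc f (c / 2)

/-- Exhaustive search: is there a set of at most `k` further vertices whose balls,
together with `cov`, cover all of `Q5`? -/
def q5search : ℕ → ℕ → Bool
  | 0, cov => cov == 4294967295
  | k+1, cov =>
    cov == 4294967295 ||
      (decide (32 ≤ q5pc 32 cov + 6 * (k+1)) &&
      (let p := q5lcb 32 cov
       q5search k (cov ||| q5ball p) ||
       q5search k (cov ||| q5ball (p ^^^ 1)) ||
       q5search k (cov ||| q5ball (p ^^^ 2)) ||
       q5search k (cov ||| q5ball (p ^^^ 4)) ||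
       q5search k (cov ||| q5ball (p ^^^ 8)) ||
       q5search k (cov ||| q5ball (p ^^^ 16))))

lemma q5enc_lt : ∀ x : Fin 5 → Fin 2, q5enc x < 32 := by decide

lemma q5ball_lt : ∀ x : Fin 5 → Fin 2, q5ball (q5enc x) < 2^32 := by decide

lemma q5ball_self : ∀ x : Fin 5 → Fin 2, (q5ball (q5enc x)).testBit (q5enc x) = true := by
  decide

lemma q5ball_flip : ∀ (x : Fin 5 → Fin 2) (i : Fin 5),
    (q5ball (q5enc (Function.update x i (x i + 1)))).testBit (q5enc x) = true := by
  decide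

lemma q5enc_surj : ∀ p : Fin 32, ∃ x : Fin 5 → Fin 2, q5enc x = p.val := by decide

lemma q5pc_ball : ∀ x : Fin 5 → Fin 2, q5pc 32 (q5ball (q5enc x)) ≤ 6 := by decide

lemma q5inv (a b : Fin 32) (h : (q5ball a.val).testBit b.val = true) :
    a.val = b.val ∨ a.val = b.val ^^^ 1 ∨ a.val = b.val ^^^ 2 ∨ a.val = b.val ^^^ 4 ∨
      a.val = b.val ^^^ 8 ∨ a.val = b.val ^^^ 16 := by revert a b; decide

lemma q5lor_div_two (x y : ℕ) : (x ||| y) / 2 = x / 2 ||| y / 2 := by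
  refine Nat.eq_of_testBit_eq fun i => ?_
  simp only [← Nat.testBit_succ, Nat.testBit_lor]

lemma q5lor_mod_two (x y : ℕ) : (x ||| y) % 2 ≤ x % 2 + y % 2 := by
  have hlt : (x ||| y) % 2 < 2 := Nat.mod_lt _ (by norm_num)
  rcases Nat.mod_two_eq_zero_or_one x with hx | hx
  · rcases Nat.mod_two_eq_zero_or_one y with hy | hy
    · have h := Nat.testBit_lor x y 0
      rw [Nat.testBit_zero, Nat.testBit_zero, Nat.testBit_zero] at h
      rw [show (decide (x % 2 = 1)) = false by simp [hx],
        show (decide (y % 2 = 1)) = false by simp [hy]] at h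
      simp only [Bool.or_false, decide_eq_false_iff_not] at h
      omega
    · omega
  · omega

lemma q5pc_lor (f : ℕ) : ∀ x y, q5pc f (x ||| y) ≤ q5pc f x + q5pc f y := by
  induction f with
  | zero => intro x y; simp [q5pc]
  | succ f ih =>
    intro x y
    simp only [q5pc, q5lor_div_two]
    have h1 := q5lor_mod_two x y
    have h2 := ih (x / 2) (y / 2)
    omega

lemma q5pc_full (f : ℕ) : ∀ c, (∀ p, p < f → c.testBit p = true) → f ≤ q5pc f c := by
  induction f with
  | zero => intro c _; simp
  | succ f ih =>
    intro c h
    have h0 : c % 2 = 1 := by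
      have := h 0 (Nat.succ_pos f)
      simpa [Nat.testBit_zero] using this
    have h1 : ∀ p, p < f → (c / 2).testBit p = true := fun p hp => by
      rw [← Nat.testBit_succ]; exact h (p+1) (by omega)
    have := ih (c / 2) h1
    simp only [q5pc]; omega

lemma q5cover_pc (A : Finset (Fin 5 → Fin 2)) : ∀ cov : ℕ,
    (∀ p, p < 32 → cov.testBit p = true ∨ ∃ v ∈ A, (q5ball (q5enc v)).testBit p = true) →
    32 ≤ q5pc 32 cov + 6 * A.card := by
  classical
  induction A using Finset.induction_on with
  | empty =>
    intro cov h
    have := q5pc_full 32 cov (fun p hp => by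
      rcases h p hp with hc | ⟨v, hv, _⟩
      · exact hc
      · exact absurd hv (Finset.notMem_empty v))
    simpa using this
  | @insert a s ha ih =>
    intro cov h
    have hcov' : ∀ p, p < 32 → (cov ||| q5ball (q5enc a)).testBit p = true ∨
        ∃ v ∈ s, (q5ball (q5enc v)).testBit p = true := by
      intro p hp
      rcases h p hp with hc | ⟨v, hv, hb⟩
      · exact Or.inl (by rw [Nat.testBit_lor, hc]; simp)
      · rcases Finset.mem_insert.mp hv with rfl | hv'
        · exact Or.inl (by rw [Nat.testBit_lor, hb]; simp)
        · exact Or.inr ⟨v, hv', hb⟩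
    have h1 := ih (cov ||| q5ball (q5enc a)) hcov'
    have h2 := q5pc_lor 32 cov (q5ball (q5enc a))
    have h3 := q5pc_ball a
    rw [Finset.card_insert_of_notMem ha]
    omega

lemma q5lcb_correct (f : ℕ) : ∀ cov, (∀ j, f ≤ j → cov.testBit j = false) →
    cov ≠ 2^f - 1 → q5lcb f cov < f ∧ cov.testBit (q5lcb f cov) = false := by
  induction f with
  | zero =>
    intro cov h hne
    exfalso
    exact hne (Nat.eq_of_testBit_eq fun i => by
      rw [h i (Nat.zero_le i)]; simp [Nat.testBit_two_pow_sub_one])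
  | succ f ih =>
    intro cov h hne
    by_cases h0 : cov % 2 = 0
    · refine ⟨by simp [q5lcb, h0, Nat.succ_pos], ?_⟩
      simp [q5lcb, h0, Nat.testBit_zero]
    · have hd : ∀ j, f ≤ j → (cov / 2).testBit j = false := fun j hj => by
        rw [← Nat.testBit_succ]; exact h (j+1) (by omega)
      have hne' : cov / 2 ≠ 2^f - 1 := by
        intro hc
        apply hne
        have := Nat.div_add_mod cov 2
        have hp : (2:ℕ)^(f+1) = 2 * 2^f := by ring
        have hpos : (1:ℕ) ≤ 2^f := Nat.one_le_two_pow
        omega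
      obtain ⟨hlt, hbit⟩ := ih (cov / 2) hd hne'
      refine ⟨?_, ?_⟩
      · simp only [q5lcb, h0, if_false]; omega
      · simp only [q5lcb, h0, if_false]
        rw [Nat.testBit_succ]; exact hbit

lemma q5main : ∀ (k : ℕ) (A : Finset (Fin 5 → Fin 2)) (cov : ℕ),
    (∀ j, 32 ≤ j → cov.testBit j = false) → A.card ≤ k →
    (∀ p, p < 32 → cov.testBit p = true ∨ ∃ v ∈ A, (q5ball (q5enc v)).testBit p = true) →
    q5search k cov = true := by
  intro k
  induction k with
  | zero =>
    intro A cov hcov hcard hfull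
    have hA : A = ∅ := Finset.card_eq_zero.mp (Nat.le_zero.mp hcard)
    subst hA
    have : cov = 4294967295 := by
      have h32 : (4294967295 : ℕ) = 2^32 - 1 := by norm_num
      refine Nat.eq_of_testBit_eq fun i => ?_
      by_cases hi : i < 32
      · rcases hfull i hi with hc | ⟨v, hv, _⟩
        · rw [hc, h32, Nat.testBit_two_pow_sub_one]; simp [hi]
        · exact absurd hv (Finset.notMem_empty v)
      · rw [hcov i (by omega), h32, Nat.testBit_two_pow_sub_one]
        simp [hi]
    simp [q5search, this]
  | succ k ih =>
    intro A cov hcov hcard hfull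
    by_cases hF : cov = 4294967295
    · simp [q5search, hF]
    · have hpc : 32 ≤ q5pc 32 cov + 6 * (k+1) := by
        have := q5cover_pc A cov hfull
        have h6 : 6 * A.card ≤ 6 * (k+1) := by omega
        omega
      have hne : cov ≠ 2^32 - 1 := by
        intro hc; exact hF (by rw [hc]; norm_num)
      obtain ⟨hp, hbit⟩ := q5lcb_correct 32 cov hcov hne
      set p := q5lcb 32 cov with hpdef
      rcases hfull p hp with hc | ⟨v, hv, hbv⟩
      · rw [hc] at hbit; cases hbit
      · have key : q5search k (cov ||| q5ball (q5enc v)) = true := by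
          apply ih (A.erase v)
          · intro j hj
            rw [Nat.testBit_lor, hcov j hj, Nat.testBit_lt_two_pow
              (lt_of_lt_of_le (q5ball_lt v) (Nat.pow_le_pow_right (by norm_num) hj))]
            rfl
          · have := Finset.card_erase_of_mem hv; omega
          · intro q hq
            rcases hfull q hq with hc' | ⟨w, hw, hbw⟩
            · exact Or.inl (by rw [Nat.testBit_lor, hc']; simp)
            · by_cases hwv : w = v
              · subst hwv
                exact Or.inl (by rw [Nat.testBit_lor, hbw]; simp)
              · exact Or.inr ⟨w, Finset.mem_erase.mpr ⟨hwv, hw⟩, hbw⟩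
        have h6 := q5inv ⟨q5enc v, q5enc_lt v⟩ ⟨p, hp⟩ hbv
        simp only [Fin.val_mk] at h6
        have hd : decide (32 ≤ q5pc 32 cov + 6 * (k+1)) = true := decide_eq_true hpc
        rcases h6 with h | h | h | h | h | h <;> rw [h] at key <;>
          simp [q5search, hd, ← hpdef, key]

lemma q5search_false : q5search 6 0 = false := by decide

lemma q5lower (A : Finset (Fin 5 → Fin 2)) (hA : AdequateSet A) : 7 ≤ A.card := by
  by_contra h
  push_neg at h
  have hs : q5search 6 0 = true := by
    apply q5main 6 A 0
    · intro j _; exact Nat.zero_testBit j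
    · omega
    · intro p hp
      obtain ⟨x, hx⟩ := q5enc_surj ⟨p, hp⟩
      simp only [Fin.val_mk] at hx
      by_cases hxA : x ∈ A
      · exact Or.inr ⟨x, hxA, by rw [← hx]; exact q5ball_self x⟩
      · obtain ⟨i, hi⟩ := hA x hxA
        exact Or.inr ⟨_, hi, hx ▸ q5ball_flip x i⟩
  rw [q5search_false] at hs
  cases hs

/-- The minimum cardinality of an adequate subset of the 5-dimensional binary cube
is 7. -/
theorem min_card_adequate_five :
    (∀ A : Finset (Fin 5 → Fin 2), AdequateSet A → 7 ≤ A.card) ∧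
    ∃ A : Finset (Fin 5 → Fin 2), AdequateSet A ∧ A.card = 7 := by
  constructor
  · exact q5lower
  · refine ⟨{![0,0,0,0,0], ![1,0,0,0,0], ![0,1,0,0,0], ![1,1,1,1,0],
      ![1,1,1,0,1], ![1,1,0,1,1], ![0,0,1,1,1]}, ?_, ?_⟩
    · unfold AdequateSet
      decide
    · decide
end
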